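/- Assume s < 1/2 and let α ∈ (2s, 1]. Then there exists a constant C > 0 depending only on d, s, Λ and α such that for every bounded φ : ℝ^d → ℝ with finite Hölder seminorm [φ]_{C^{0,α}(ℝ^d)}, the values M_ρ^± φ(x) are finite for every x ∈ ℝ^d and for all x, y ∈ ℝ^d one has |M_ρ^± φ(x) − M_ρ^± φ(y)| ≤ C [φ]_{C^{0,α}(ℝ^d)} |x−y|^{α−2s} (both for M_ρ^+ and for M_ρ^−). -/

import Mathlib

open MeasureTheory Metric Set
open scoped Classical

noncomputable section

abbrev Ed (d : ℕ) := EuclideanSpace ℝ (Fin d)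

/-- `min{|y|^{-d-2s}, ρ^{-d-2s}}`, with the convention that it equals `|y|^{-d-2s}` when `ρ = 0`. -/
def truncKer (d : ℕ) (s ρ : ℝ) (y : Ed d) : ℝ :=
  if ρ = 0 then ‖y‖ ^ (-(d : ℝ) - 2 * s)
  else min (‖y‖ ^ (-(d : ℝ) - 2 * s)) (ρ ^ (-(d : ℝ) - 2 * s))

/-- The kernel class `𝒦_ρ` with ellipticity constants `lam ≤ Lam` and order `2s`. -/
def KernelClass (d : ℕ) (s lam Lam ρ : ℝ) : Set (Ed d → ℝ) :=
  {K | Measurable K ∧ (∀ y, 0 ≤ K y) ∧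
    (∀ y : Ed d, y ≠ 0 → lam * truncKer d s ρ y ≤ K y) ∧
    (∀ r : ℝ, 0 < r →
      ∫⁻ y in ball (0 : Ed d) (2 * r) \ ball 0 r, ENNReal.ofReal (K y) ≤
        ENNReal.ofReal (Lam * r ^ (-(2 * s)))) ∧
    (s = 1 / 2 → ∀ r : ℝ, 0 < r →
      (∫ y in ball (0 : Ed d) (2 * r) \ ball 0 r, K y • y) = (0 : Ed d))}

/-- The increment `δ_y u (x)`, whose form depends on whether `s < 1/2`, `s = 1/2` or `s > 1/2`. -/
def incr (d : ℕ) (s : ℝ) (u : Ed d → ℝ) (x y : Ed d) : ℝ :=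
  if s < 1 / 2 then u (x + y) - u x
  else if s = 1 / 2 then u (x + y) - u x - (if ‖y‖ < 1 then fderiv ℝ u x y else 0)
  else u (x + y) - u x - fderiv ℝ u x y

/-- The linear integro-differential operator `L_K u (x) = ∫ δ_y u(x) K(y) dy`. -/
def opL (d : ℕ) (s : ℝ) (K u : Ed d → ℝ) (x : Ed d) : ℝ :=
  ∫ y, incr d s u x y * K y

/-- Pucci extremal operator `M_ρ^- u(x) = inf_{K ∈ 𝒦_ρ} L_K u (x)`. -/
def pucciInf (d : ℕ) (s lam Lam ρ : ℝ) (u : Ed d → ℝ) (x : Ed d) : ℝ :=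
  sInf ((fun K => opL d s K u x) '' KernelClass d s lam Lam ρ)

/-- Pucci extremal operator `M_ρ^+ u(x) = sup_{K ∈ 𝒦_ρ} L_K u (x)`. -/
def pucciSup (d : ℕ) (s lam Lam ρ : ℝ) (u : Ed d → ℝ) (x : Ed d) : ℝ :=
  sSup ((fun K => opL d s K u x) '' KernelClass d s lam Lam ρ)

/-- Parabolic distance `d((x,t),(y,τ)) = max{|x-y|, |t-τ|^{1/(2s)}}`. -/
def parDist (d : ℕ) (s : ℝ) (p q : Ed d × ℝ) : ℝ :=
  max ‖p.1 - q.1‖ (|p.2 - q.2| ^ (1 / (2 * s)))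

/-- The function `v` that equals the test function `φ` on the test cylinder
`B_ε(x₀) × (t₀-ε, t₀]` and `u` elsewhere. -/
def patchFn (d : ℕ) (u φ : Ed d → ℝ → ℝ) (x₀ : Ed d) (t₀ ε : ℝ) : Ed d → ℝ → ℝ :=
  fun x t => if x ∈ ball x₀ ε ∧ t ∈ Ioc (t₀ - ε) t₀ then φ x t else u x t

/-- `φ` is an admissible (parabolic) test function on the cylinder `B_ε(x₀) × (t₀-ε, t₀]`:
`C^{1,1}` in space and left-differentiable in time. -/
def IsTestFn (d : ℕ) (φ : Ed d → ℝ → ℝ) (x₀ : Ed d) (t₀ ε : ℝ) : Prop :=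
  (∀ t ∈ Ioc (t₀ - ε) t₀, ∀ x ∈ ball x₀ ε, DifferentiableAt ℝ (fun z => φ z t) x) ∧
  (∀ t ∈ Ioc (t₀ - ε) t₀, ∃ L : NNReal,
    LipschitzOnWith L (fun x => fderiv ℝ (fun z => φ z t) x) (ball x₀ ε)) ∧
  (∀ x ∈ ball x₀ ε, ∀ t ∈ Ioc (t₀ - ε) t₀,
    ∃ D : ℝ, HasDerivWithinAt (fun τ => φ x τ) D (Iic t) t)

/-- Viscosity supersolution of `∂ₜ u + drift·|∇u| − M u ≥ f` in `Ω × I`. -/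
def IsViscSuper (d : ℕ) (drift : ℝ) (M : (Ed d → ℝ) → Ed d → ℝ)
    (f : Ed d → ℝ → ℝ) (Ω : Set (Ed d)) (I : Set ℝ) (u : Ed d → ℝ → ℝ) : Prop :=
  LowerSemicontinuousOn (fun p : Ed d × ℝ => u p.1 p.2) (Ω ×ˢ I) ∧
  ∀ x₀ ∈ Ω, ∀ t₀ ∈ I, ∀ ε : ℝ, 0 < ε → ball x₀ ε ⊆ Ω → Ioc (t₀ - ε) t₀ ⊆ I →
    ∀ φ : Ed d → ℝ → ℝ, IsTestFn d φ x₀ t₀ ε → φ x₀ t₀ = u x₀ t₀ →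
      (∀ x ∈ ball x₀ ε, ∀ t ∈ Ioc (t₀ - ε) t₀, φ x t ≤ u x t) →
      f x₀ t₀ ≤
        derivWithin (patchFn d u φ x₀ t₀ ε x₀) (Iic t₀) t₀
          + drift * ‖fderiv ℝ (fun z => patchFn d u φ x₀ t₀ ε z t₀) x₀‖
          - M (fun z => patchFn d u φ x₀ t₀ ε z t₀) x₀

/-- Viscosity subsolution of `∂ₜ u − drift·|∇u| − M u ≤ f` in `Ω × I`. -/
def IsViscSub (d : ℕ) (drift : ℝ) (M : (Ed d → ℝ) → Ed d → ℝ)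
    (f : Ed d → ℝ → ℝ) (Ω : Set (Ed d)) (I : Set ℝ) (u : Ed d → ℝ → ℝ) : Prop :=
  UpperSemicontinuousOn (fun p : Ed d × ℝ => u p.1 p.2) (Ω ×ˢ I) ∧
  ∀ x₀ ∈ Ω, ∀ t₀ ∈ I, ∀ ε : ℝ, 0 < ε → ball x₀ ε ⊆ Ω → Ioc (t₀ - ε) t₀ ⊆ I →
    ∀ φ : Ed d → ℝ → ℝ, IsTestFn d φ x₀ t₀ ε → φ x₀ t₀ = u x₀ t₀ →
      (∀ x ∈ ball x₀ ε, ∀ t ∈ Ioc (t₀ - ε) t₀, u x t ≤ φ x t) →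
      derivWithin (patchFn d u φ x₀ t₀ ε x₀) (Iic t₀) t₀
          - drift * ‖fderiv ℝ (fun z => patchFn d u φ x₀ t₀ ε z t₀) x₀‖
          - M (fun z => patchFn d u φ x₀ t₀ ε z t₀) x₀ ≤ f x₀ t₀

/-!
For `s < 1/2` the increment needs no gradient correction, so
`L_K φ x = ∫ (φ (x + y) - φ x) K y dy`. Cutting `ℝ^d` into dyadic annuli `B_{2t} \ B_t`, on each
of which `K` has mass at most `Λ t^{-2s}`, gives `∫ |ψ| K ≤ C (A r^{α-2s} + B r^{-2s})` whenever
`|ψ y| ≤ min (A |y|^α) B`: the series over the annuli inside `B_r` converges because `α > 2s`,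
the one outside because `s > 0`. The second difference `ψ z = δ_z φ x - δ_z φ y` is bounded by
`2H min (|z|^α) (|x - y|^α)`, so taking `r = |x - y|` bounds `|L_K φ x - L_K φ y|` by
`C H |x - y|^{α-2s}` uniformly in `K ∈ 𝒦_ρ`, and such a uniform bound passes to the infimum and
the supremum over the kernel class.
-/

open Filter Topology
open scoped ENNReal

section Integrals

variable {X : Type*} [MeasurableSpace X] {μ : Measure X} {f : X → ℝ≥0∞}

lemma setLIntegral_le_of_subset_iUnion_geometric {S : Set X} {A : ℕ → Set X}
    (hS : S ⊆ ⋃ n, A n) {c q : ℝ} (hc : 0 ≤ c) (hq₀ : 0 ≤ q) (hq₁ : q < 1)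
    (hA : ∀ n, ∫⁻ y in A n, f y ∂μ ≤ ENNReal.ofReal (c * q ^ n)) :
    ∫⁻ y in S, f y ∂μ ≤ ENNReal.ofReal (c * (1 - q)⁻¹) :=
  calc ∫⁻ y in S, f y ∂μ ≤ ∑' n, ∫⁻ y in A n, f y ∂μ :=
        (lintegral_mono_set hS).trans (lintegral_iUnion_le _ _)
    _ ≤ ∑' n, ENNReal.ofReal (c * q ^ n) := ENNReal.tsum_le_tsum hA
    _ = ENNReal.ofReal (c * (1 - q)⁻¹) := by
        rw [← ENNReal.ofReal_tsum_of_nonneg (fun n => by positivity)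
          ((summable_geometric_of_lt_one hq₀ hq₁).mul_left c), tsum_mul_left,
          tsum_geometric_of_lt_one hq₀ hq₁]

lemma integrable_and_abs_integral_le {g : X → ℝ} (hg : AEStronglyMeasurable g μ) {M : ℝ}
    (hM : 0 ≤ M) (h : ∫⁻ y, ENNReal.ofReal |g y| ∂μ ≤ ENNReal.ofReal M) :
    Integrable g μ ∧ |∫ y, g y ∂μ| ≤ M := by
  simp only [← Real.norm_eq_abs] at h ⊢
  exact ⟨⟨hg, (hasFiniteIntegral_iff_norm g).2 (h.trans_lt ENNReal.ofReal_lt_top)⟩,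
    (norm_integral_le_lintegral_norm g).trans (ENNReal.toReal_le_of_le_ofReal hM h)⟩

end Integrals

/-- The sum of the geometric series of dyadic annulus bounds inside and outside a ball. -/
def dyadicConst (s α Lam : ℝ) : ℝ :=
  2 ^ α * Lam / (2 ^ (α - 2 * s) - 1) + Lam * (1 - 2 ^ (-(2 * s)))⁻¹

lemma dyadicConst_pos {s α Lam : ℝ} (hs : 0 < s) (hα : 2 * s < α) (hLam : 0 < Lam) :
    0 < dyadicConst s α Lam := by
  have h₁ : 1 < (2 : ℝ) ^ (α - 2 * s) := Real.one_lt_rpow one_lt_two (by linarith)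
  have h₂ : (2 : ℝ) ^ (-(2 * s)) < 1 :=
    Real.rpow_lt_one_of_one_lt_of_neg one_lt_two (by linarith)
  have : 0 < (2 : ℝ) ^ (α - 2 * s) - 1 := by linarith
  have : 0 < 1 - (2 : ℝ) ^ (-(2 * s)) := by linarith
  unfold dyadicConst
  positivity

section Dyadic

variable {E : Type*} [NormedAddCommGroup E]

lemma exists_zpow_mem_annulus {r : ℝ} (hr : 0 < r) {y : E} (hy : y ≠ 0) :
    ∃ n : ℤ, y ∈ ball (0 : E) (2 * (2 ^ n * r)) \ ball 0 (2 ^ n * r) := by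
  obtain ⟨n, h₁, h₂⟩ := exists_mem_Ico_zpow (div_pos (norm_pos_iff.2 hy) hr) one_lt_two
  rw [le_div_iff₀ hr] at h₁
  rw [div_lt_iff₀ hr, zpow_add_one₀ two_ne_zero] at h₂
  refine ⟨n, ?_⟩
  simp only [Set.mem_sdiff, mem_ball_zero_iff, not_lt]
  exact ⟨by linarith, h₁⟩

lemma compl_ball_subset_iUnion_annulus {r : ℝ} (hr : 0 < r) :
    (ball (0 : E) r)ᶜ ⊆ ⋃ n : ℕ, ball (0 : E) (2 * (2 ^ n * r)) \ ball 0 (2 ^ n * r) := by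
  intro y hy
  rw [mem_compl_iff, mem_ball_zero_iff, not_lt] at hy
  obtain ⟨n, hn⟩ := exists_zpow_mem_annulus hr (norm_pos_iff.1 (hr.trans_le hy))
  have hn₀ : 0 ≤ n := by
    by_contra! hneg
    have h₁ : (2 : ℝ) ^ (n + 1) ≤ 1 := zpow_le_one_of_nonpos₀ one_le_two (by omega)
    have h₂ := mem_ball_zero_iff.1 hn.1
    rw [zpow_add_one₀ two_ne_zero] at h₁
    nlinarith
  lift n to ℕ using hn₀
  exact mem_iUnion.2 ⟨n, by simpa using hn⟩

lemma ball_subset_insert_iUnion_annulus {r : ℝ} (hr : 0 < r) :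
    ball (0 : E) r ⊆ insert 0 (⋃ m : ℕ,
      ball (0 : E) (2 * ((2 ^ (m + 1))⁻¹ * r)) \ ball 0 ((2 ^ (m + 1))⁻¹ * r)) := by
  intro y hy
  rcases eq_or_ne y 0 with rfl | hy₀
  · exact mem_insert _ _
  obtain ⟨n, hn⟩ := exists_zpow_mem_annulus hr hy₀
  have hneg : n < 0 := by
    by_contra! hn₀
    have h₁ : (1 : ℝ) ≤ 2 ^ n := one_le_zpow₀ one_le_two hn₀
    have h₂ := hn.2
    rw [mem_ball_zero_iff, not_lt] at h₂
    nlinarith [mem_ball_zero_iff.1 hy]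
  obtain ⟨m, rfl⟩ := Int.eq_negSucc_of_lt_zero hneg
  rw [zpow_negSucc] at hn
  exact mem_insert_of_mem _ (mem_iUnion.2 ⟨m, hn⟩)

variable [MeasurableSpace E] {μ : Measure E} {k : E → ℝ≥0∞} {s α Lam : ℝ}

lemma setLIntegral_compl_ball_le (hs : 0 < s)
    (hk : ∀ t : ℝ, 0 < t → ∫⁻ y in ball (0 : E) (2 * t) \ ball 0 t, k y ∂μ ≤
      ENNReal.ofReal (Lam * t ^ (-(2 * s))))
    (hLam : 0 ≤ Lam) {r : ℝ} (hr : 0 < r) :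
    ∫⁻ y in (ball (0 : E) r)ᶜ, k y ∂μ ≤
      ENNReal.ofReal (Lam * (1 - 2 ^ (-(2 * s)))⁻¹ * r ^ (-(2 * s))) := by
  refine (setLIntegral_le_of_subset_iUnion_geometric (compl_ball_subset_iUnion_annulus hr)
    (c := Lam * r ^ (-(2 * s))) (q := 2 ^ (-(2 * s))) (by positivity) (by positivity)
    (Real.rpow_lt_one_of_one_lt_of_neg one_lt_two (by linarith))
    fun n => (hk _ (by positivity)).trans_eq ?_).trans_eq (by ring_nf)
  rw [Real.mul_rpow (by positivity) hr.le, ← Real.rpow_pow_comm zero_le_two]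
  ring_nf

variable [OpensMeasurableSpace E]

lemma setLIntegral_annulus_rpow_mul_le {t : ℝ} (hα : 0 ≤ α) (ht : 0 < t)
    (hk : ∫⁻ y in ball (0 : E) (2 * t) \ ball 0 t, k y ∂μ ≤
      ENNReal.ofReal (Lam * t ^ (-(2 * s)))) :
    ∫⁻ y in ball (0 : E) (2 * t) \ ball 0 t, ENNReal.ofReal (‖y‖ ^ α) * k y ∂μ ≤
      ENNReal.ofReal (2 ^ α * Lam * t ^ (α - 2 * s)) :=
  calc ∫⁻ y in ball (0 : E) (2 * t) \ ball 0 t, ENNReal.ofReal (‖y‖ ^ α) * k y ∂μ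
      ≤ ∫⁻ y in ball (0 : E) (2 * t) \ ball 0 t, ENNReal.ofReal ((2 * t) ^ α) * k y ∂μ :=
        setLIntegral_mono' (measurableSet_ball.diff measurableSet_ball) fun y hy => by
          gcongr
          exact (mem_ball_zero_iff.1 hy.1).le
    _ ≤ ENNReal.ofReal ((2 * t) ^ α) * ENNReal.ofReal (Lam * t ^ (-(2 * s))) := by
        rw [lintegral_const_mul' _ _ ENNReal.ofReal_ne_top]
        gcongr
    _ = ENNReal.ofReal (2 ^ α * Lam * t ^ (α - 2 * s)) := by
        rw [← ENNReal.ofReal_mul (by positivity), Real.mul_rpow zero_le_two ht.le,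
          sub_eq_add_neg, Real.rpow_add ht]
        ring_nf

lemma setLIntegral_ball_rpow_mul_le (hα₀ : 0 < α) (hα : 2 * s < α)
    (hk : ∀ t : ℝ, 0 < t → ∫⁻ y in ball (0 : E) (2 * t) \ ball 0 t, k y ∂μ ≤
      ENNReal.ofReal (Lam * t ^ (-(2 * s))))
    (hLam : 0 ≤ Lam) {r : ℝ} (hr : 0 < r) :
    ∫⁻ y in ball (0 : E) r, ENNReal.ofReal (‖y‖ ^ α) * k y ∂μ ≤
      ENNReal.ofReal (2 ^ α * Lam / (2 ^ (α - 2 * s) - 1) * r ^ (α - 2 * s)) := by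
  have h₂ : 1 < (2 : ℝ) ^ (α - 2 * s) := Real.one_lt_rpow one_lt_two (by linarith)
  set q : ℝ := ((2 : ℝ) ^ (α - 2 * s))⁻¹
  calc ∫⁻ y in ball (0 : E) r, ENNReal.ofReal (‖y‖ ^ α) * k y ∂μ
      ≤ ∫⁻ y in ⋃ m : ℕ, ball (0 : E) (2 * ((2 ^ (m + 1))⁻¹ * r)) \
          ball 0 ((2 ^ (m + 1))⁻¹ * r), ENNReal.ofReal (‖y‖ ^ α) * k y ∂μ := by
        refine (lintegral_mono_set (ball_subset_insert_iUnion_annulus hr)).trans ?_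
        rw [insert_eq]
        refine (lintegral_union_le _ _ _).trans_eq ?_
        simp [Real.zero_rpow hα₀.ne']
    _ ≤ ENNReal.ofReal (2 ^ α * Lam * r ^ (α - 2 * s) * q * (1 - q)⁻¹) := by
        refine setLIntegral_le_of_subset_iUnion_geometric subset_rfl (by positivity)
          (by positivity) (inv_lt_one_of_one_lt₀ h₂) fun m =>
            (setLIntegral_annulus_rpow_mul_le hα₀.le (by positivity)
              (hk _ (by positivity))).trans_eq ?_
        rw [Real.mul_rpow (by positivity) hr.le, Real.inv_rpow (by positivity),
          ← Real.rpow_pow_comm zero_le_two]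
        simp only [q, pow_succ, mul_inv, inv_pow]
        ring_nf
    _ = ENNReal.ofReal (2 ^ α * Lam / (2 ^ (α - 2 * s) - 1) * r ^ (α - 2 * s)) := by
        have : (2 : ℝ) ^ (α - 2 * s) - 1 ≠ 0 := by linarith
        congr 1
        simp only [q]
        field_simp

lemma lintegral_abs_mul_le (hs : 0 < s) (hα : 2 * s < α) (hLam : 0 ≤ Lam)
    (hk : ∀ t : ℝ, 0 < t → ∫⁻ y in ball (0 : E) (2 * t) \ ball 0 t, k y ∂μ ≤
      ENNReal.ofReal (Lam * t ^ (-(2 * s))))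
    {ψ : E → ℝ} {A B r : ℝ} (hA : 0 ≤ A) (hB : 0 ≤ B) (hr : 0 < r)
    (hψA : ∀ y, |ψ y| ≤ A * ‖y‖ ^ α) (hψB : ∀ y, |ψ y| ≤ B) :
    ∫⁻ y, ENNReal.ofReal |ψ y| * k y ∂μ ≤
      ENNReal.ofReal (dyadicConst s α Lam * (A * r ^ (α - 2 * s) + B * r ^ (-(2 * s)))) := by
  have hα₀ : 0 < α := by linarith
  have ha : 0 ≤ 2 ^ α * Lam / (2 ^ (α - 2 * s) - 1) :=
    div_nonneg (by positivity)
      (by linarith [Real.one_lt_rpow one_lt_two (by linarith : 0 < α - 2 * s)])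
  have hb : 0 ≤ Lam * (1 - 2 ^ (-(2 * s)))⁻¹ := mul_nonneg hLam <| inv_nonneg.2 <| by
    linarith [Real.rpow_lt_one_of_one_lt_of_neg one_lt_two (by linarith : -(2 * s) < 0)]
  rw [← lintegral_add_compl _ (measurableSet_ball (x := 0) (ε := r))]
  calc (∫⁻ y in ball 0 r, ENNReal.ofReal |ψ y| * k y ∂μ)
        + ∫⁻ y in (ball 0 r)ᶜ, ENNReal.ofReal |ψ y| * k y ∂μ
      ≤ ENNReal.ofReal A *
          ENNReal.ofReal (2 ^ α * Lam / (2 ^ (α - 2 * s) - 1) * r ^ (α - 2 * s))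
        + ENNReal.ofReal B *
          ENNReal.ofReal (Lam * (1 - 2 ^ (-(2 * s)))⁻¹ * r ^ (-(2 * s))) := by
        gcongr ?_ + ?_
        · calc ∫⁻ y in ball 0 r, ENNReal.ofReal |ψ y| * k y ∂μ
              ≤ ∫⁻ y in ball 0 r, ENNReal.ofReal A * (ENNReal.ofReal (‖y‖ ^ α) * k y) ∂μ :=
                lintegral_mono fun y => by
                  rw [← mul_assoc, ← ENNReal.ofReal_mul hA]
                  gcongr
                  exact hψA y
            _ ≤ _ := by
                rw [lintegral_const_mul' _ _ ENNReal.ofReal_ne_top]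
                gcongr
                exact setLIntegral_ball_rpow_mul_le hα₀ hα hk hLam hr
        · calc ∫⁻ y in (ball 0 r)ᶜ, ENNReal.ofReal |ψ y| * k y ∂μ
              ≤ ∫⁻ y in (ball 0 r)ᶜ, ENNReal.ofReal B * k y ∂μ :=
                lintegral_mono fun y => by
                  gcongr
                  exact hψB y
            _ ≤ _ := by
                rw [lintegral_const_mul' _ _ ENNReal.ofReal_ne_top]
                gcongr
                exact setLIntegral_compl_ball_le hs hk hLam hr
    _ ≤ _ := by
        rw [← ENNReal.ofReal_mul hA, ← ENNReal.ofReal_mul hB,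
          ← ENNReal.ofReal_add (by positivity) (by positivity)]
        refine ENNReal.ofReal_le_ofReal ?_
        unfold dyadicConst
        nlinarith [mul_nonneg (mul_nonneg ha hB) (by positivity : (0 : ℝ) ≤ r ^ (-(2 * s))),
          mul_nonneg (mul_nonneg hb hA) (by positivity : (0 : ℝ) ≤ r ^ (α - 2 * s))]

lemma integrable_mul_and_abs_integral_mul_le (hs : 0 < s) (hα : 2 * s < α) (hLam : 0 < Lam)
    {K : E → ℝ} (hKm : Measurable K) (hK₀ : ∀ y, 0 ≤ K y)
    (hK : ∀ t : ℝ, 0 < t →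
      ∫⁻ y in ball (0 : E) (2 * t) \ ball 0 t, ENNReal.ofReal (K y) ∂μ ≤
        ENNReal.ofReal (Lam * t ^ (-(2 * s))))
    {ψ : E → ℝ} (hψm : Measurable ψ) {A B r : ℝ} (hA : 0 ≤ A) (hB : 0 ≤ B) (hr : 0 < r)
    (hψA : ∀ y, |ψ y| ≤ A * ‖y‖ ^ α) (hψB : ∀ y, |ψ y| ≤ B) :
    Integrable (fun y => ψ y * K y) μ ∧
      |∫ y, ψ y * K y ∂μ| ≤
        dyadicConst s α Lam * (A * r ^ (α - 2 * s) + B * r ^ (-(2 * s))) :=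
  integrable_and_abs_integral_le (g := fun y => ψ y * K y)
    (hψm.mul hKm).aestronglyMeasurable
    (mul_nonneg (dyadicConst_pos hs hα hLam).le (by positivity)) <| by
      simpa only [abs_mul, abs_of_nonneg (hK₀ _), ENNReal.ofReal_mul (abs_nonneg _)] using
        lintegral_abs_mul_le hs hα hLam.le hK hA hB hr hψA hψB

end Dyadic

lemma continuous_of_abs_sub_le_rpow {E : Type*} [SeminormedAddCommGroup E] {φ : E → ℝ}
    {H α : ℝ} (hα : 0 < α) (hφ : ∀ x y, |φ x - φ y| ≤ H * ‖x - y‖ ^ α) : Continuous φ := by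
  refine continuous_iff_continuousAt.2 fun x => tendsto_iff_norm_sub_tendsto_zero.2 <|
    squeeze_zero (fun _ => norm_nonneg _) (fun y => hφ y x) ?_
  have h : Tendsto (fun y => ‖y - x‖) (𝓝 x) (𝓝 0) :=
    tendsto_iff_norm_sub_tendsto_zero.1 tendsto_id
  simpa [Real.zero_rpow hα.ne'] using (h.rpow_const (Or.inr hα.le)).const_mul H

section Pucci

variable {ι : Type*} {S : Set ι} {F G : ι → ℝ} {M : ℝ}

lemma abs_csInf_image_sub_csInf_image_le (hM : 0 ≤ M) (hF : BddBelow (F '' S))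
    (hG : BddBelow (G '' S)) (h : ∀ i ∈ S, |F i - G i| ≤ M) :
    |sInf (F '' S) - sInf (G '' S)| ≤ M := by
  rcases S.eq_empty_or_nonempty with rfl | hS
  · simpa using hM
  have key : ∀ F G : ι → ℝ, BddBelow (F '' S) → (∀ i ∈ S, |F i - G i| ≤ M) →
      sInf (F '' S) - M ≤ sInf (G '' S) := fun F G hF h =>
    le_csInf (hS.image G) <| forall_mem_image.2 fun i hi => by
      linarith [csInf_le hF (mem_image_of_mem F hi), (abs_le.1 (h i hi)).2]
  rw [abs_sub_le_iff]
  constructor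
  · linarith [key F G hF h]
  · linarith [key G F hG fun i hi => abs_sub_comm (F i) (G i) ▸ h i hi]

lemma abs_csSup_image_sub_csSup_image_le (hM : 0 ≤ M) (hF : BddAbove (F '' S))
    (hG : BddAbove (G '' S)) (h : ∀ i ∈ S, |F i - G i| ≤ M) :
    |sSup (F '' S) - sSup (G '' S)| ≤ M := by
  rcases S.eq_empty_or_nonempty with rfl | hS
  · simpa using hM
  have key : ∀ F G : ι → ℝ, BddAbove (G '' S) → (∀ i ∈ S, |F i - G i| ≤ M) →
      sSup (F '' S) ≤ sSup (G '' S) + M := fun F G hG h =>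
    csSup_le (hS.image F) <| forall_mem_image.2 fun i hi => by
      linarith [le_csSup hG (mem_image_of_mem G hi), (abs_le.1 (h i hi)).2]
  rw [abs_sub_le_iff]
  constructor
  · linarith [key F G hG h]
  · linarith [key G F hF fun i hi => abs_sub_comm (F i) (G i) ▸ h i hi]

end Pucci

section Operator

variable {d : ℕ} {s lam Lam ρ α H Cb : ℝ} {K φ : Ed d → ℝ}

lemma opL_eq_integral (hs : s < 1 / 2) (x : Ed d) :
    opL d s K φ x = ∫ y, (φ (x + y) - φ x) * K y := by
  simp only [opL, incr, if_pos hs]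

lemma integrable_incr_mul_and_abs_opL_le (hK : K ∈ KernelClass d s lam Lam ρ) (hs : 0 < s)
    (hs2 : s < 1 / 2) (hα : 2 * s < α) (hLam : 0 < Lam) (hH : 0 ≤ H)
    (hφ : ∀ x y, |φ x - φ y| ≤ H * ‖x - y‖ ^ α) (hCb : ∀ x, |φ x| ≤ Cb) (x : Ed d) :
    Integrable (fun y => (φ (x + y) - φ x) * K y) ∧
      |opL d s K φ x| ≤ dyadicConst s α Lam * (H + 2 * Cb) := by
  obtain ⟨hKm, hK₀, -, hKann, -⟩ := hK
  have hφc := continuous_of_abs_sub_le_rpow (by linarith) hφ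
  obtain ⟨hint, hle⟩ := integrable_mul_and_abs_integral_mul_le hs hα hLam hKm hK₀ hKann
    (by fun_prop : Measurable fun y => φ (x + y) - φ x) (B := 2 * Cb) hH
    (by linarith [(abs_nonneg _).trans (hCb 0)]) one_pos
    (fun y => by simpa using hφ (x + y) x)
    (fun y => (abs_sub _ _).trans (by linarith [hCb (x + y), hCb x]))
  refine ⟨hint, ?_⟩
  simpa [opL_eq_integral hs2] using hle

lemma abs_opL_sub_opL_le (hK : K ∈ KernelClass d s lam Lam ρ) (hs : 0 < s)
    (hs2 : s < 1 / 2) (hα : 2 * s < α) (hLam : 0 < Lam) (hH : 0 ≤ H)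
    (hφ : ∀ x y, |φ x - φ y| ≤ H * ‖x - y‖ ^ α) (hCb : ∀ x, |φ x| ≤ Cb) (x y : Ed d) :
    |opL d s K φ x - opL d s K φ y| ≤
      4 * dyadicConst s α Lam * H * ‖x - y‖ ^ (α - 2 * s) := by
  have hc := dyadicConst_pos hs hα hLam
  rcases eq_or_ne x y with rfl | hxy
  · simp only [sub_self, abs_zero]
    positivity
  have hr : 0 < ‖x - y‖ := norm_pos_iff.2 (sub_ne_zero.2 hxy)
  have hφc := continuous_of_abs_sub_le_rpow (by linarith) hφ
  obtain ⟨-, hle⟩ := integrable_mul_and_abs_integral_mul_le hs hα hLam hK.1 hK.2.1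
    hK.2.2.2.1
    (by fun_prop : Measurable fun z => (φ (x + z) - φ x) - (φ (y + z) - φ y))
    (by positivity : 0 ≤ 2 * H) (by positivity : 0 ≤ 2 * H * ‖x - y‖ ^ α) hr
    (fun z => (abs_sub _ _).trans (by
      linarith [show |φ (x + z) - φ x| ≤ _ by simpa using hφ (x + z) x,
        show |φ (y + z) - φ y| ≤ _ by simpa using hφ (y + z) y]))
    (fun z => by
      rw [sub_sub_sub_comm]
      refine (abs_sub _ _).trans ?_
      linarith [show |φ (x + z) - φ (y + z)| ≤ _ by simpa using hφ (x + z) (y + z),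
        hφ x y])
  rw [opL_eq_integral hs2, opL_eq_integral hs2, ← integral_sub
    (integrable_incr_mul_and_abs_opL_le hK hs hs2 hα hLam hH hφ hCb x).1
    (integrable_incr_mul_and_abs_opL_le hK hs hs2 hα hLam hH hφ hCb y).1]
  simp only [← sub_mul]
  refine hle.trans_eq ?_
  rw [mul_assoc (2 * H), ← Real.rpow_add hr]
  ring_nf

end Operator

theorem statement6_general (d : ℕ) (s Lam α : ℝ) (hs : s ∈ Ioo (0:ℝ) 1)
    (hs2 : s < 1 / 2) (hLam : 0 < Lam) (hα : α ∈ Ioc (2 * s) 1) :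
    ∃ C : ℝ, 0 < C ∧ ∀ lam ρ : ℝ, 0 < lam → lam ≤ Lam → 0 ≤ ρ →
      ∀ φ : Ed d → ℝ, (∃ Cb : ℝ, ∀ x, |φ x| ≤ Cb) →
      ∀ H : ℝ, 0 ≤ H → (∀ x y : Ed d, |φ x - φ y| ≤ H * ‖x - y‖ ^ α) →
        (∀ x : Ed d,
          BddBelow ((fun K => opL d s K φ x) '' KernelClass d s lam Lam ρ) ∧
          BddAbove ((fun K => opL d s K φ x) '' KernelClass d s lam Lam ρ)) ∧
        ∀ x y : Ed d,
          |pucciInf d s lam Lam ρ φ x - pucciInf d s lam Lam ρ φ y| ≤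
            C * H * ‖x - y‖ ^ (α - 2 * s) ∧
          |pucciSup d s lam Lam ρ φ x - pucciSup d s lam Lam ρ φ y| ≤
            C * H * ‖x - y‖ ^ (α - 2 * s) := by
  have hc := dyadicConst_pos hs.1 hα.1 hLam
  refine ⟨4 * dyadicConst s α Lam, by positivity, ?_⟩
  intro lam ρ _ _ _ φ ⟨Cb, hCb⟩ H hH hφ
  have hbound x K (hK : K ∈ KernelClass d s lam Lam ρ) :=
    (integrable_incr_mul_and_abs_opL_le hK hs.1 hs2 hα.1 hLam hH hφ hCb x).2
  have hdiff x y K (hK : K ∈ KernelClass d s lam Lam ρ) :=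
    abs_opL_sub_opL_le hK hs.1 hs2 hα.1 hLam hH hφ hCb x y
  have hbdd x : BddBelow ((fun K => opL d s K φ x) '' KernelClass d s lam Lam ρ) ∧
      BddAbove ((fun K => opL d s K φ x) '' KernelClass d s lam Lam ρ) :=
    ⟨⟨_, forall_mem_image.2 fun K hK => neg_le_of_abs_le (hbound x K hK)⟩,
      ⟨_, forall_mem_image.2 fun K hK => le_of_abs_le (hbound x K hK)⟩⟩
  refine ⟨hbdd, fun x y => ⟨?_, ?_⟩⟩
  · exact abs_csInf_image_sub_csInf_image_le (by positivity) (hbdd x).1 (hbdd y).1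
      (hdiff x y)
  · exact abs_csSup_image_sub_csSup_image_le (by positivity) (hbdd x).2 (hbdd y).2
      (hdiff x y)

/-- for `s < 1/2` and `α ∈ (2s,1]`, the Pucci operators map `C^{0,α}(ℝ^d)` to
`C^{0,α-2s}(ℝ^d)` with a universal seminorm bound. -/
theorem statement6 (d : ℕ) (hd : 1 ≤ d) (s Lam α : ℝ) (hs : s ∈ Ioo (0:ℝ) 1)
    (hs2 : s < 1 / 2) (hLam : 0 < Lam) (hα : α ∈ Ioc (2 * s) 1) :
    ∃ C : ℝ, 0 < C ∧ ∀ lam ρ : ℝ, 0 < lam → lam ≤ Lam → 0 ≤ ρ →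
      ∀ φ : Ed d → ℝ, (∃ Cb : ℝ, ∀ x, |φ x| ≤ Cb) →
      ∀ H : ℝ, 0 ≤ H → (∀ x y : Ed d, |φ x - φ y| ≤ H * ‖x - y‖ ^ α) →
        (∀ x : Ed d,
          BddBelow ((fun K => opL d s K φ x) '' KernelClass d s lam Lam ρ) ∧
          BddAbove ((fun K => opL d s K φ x) '' KernelClass d s lam Lam ρ)) ∧
        ∀ x y : Ed d,
          |pucciInf d s lam Lam ρ φ x - pucciInf d s lam Lam ρ φ y| ≤
            C * H * ‖x - y‖ ^ (α - 2 * s) ∧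
          |pucciSup d s lam Lam ρ φ x - pucciSup d s lam Lam ρ φ y| ≤
            C * H * ‖x - y‖ ^ (α - 2 * s) :=
  statement6_general d s Lam α hs hs2 hLam hα
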